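/- Let ω be a configuration and let C₁ be a connected component of ω̄. Suppose (x₁, r₁) ∈ ω with B̄(x₁, r₁) ⊆ C₁, and (x₂, r₂) ∈ ω with B̄(x₂, r₂) ∩ C₁ = ∅. Then there exists a point x on the line segment [x₁, x₂] such that d(x, C₁) = d(x, ω̄ ∖ C₁) > 0; consequently, |x − y| > R ≥ R₀ for every (y,R) ∈ ω, so the open ball B(x, R₀) contains no germ of ω. -/

import Mathlib

open Metric Set

/-- The germ-grain surface of a finite configuration: the union of the closed balls. -/
def surface (ω : Finset (EuclideanSpace ℝ (Fin 2) × ℝ)) : Set (EuclideanSpace ℝ (Fin 2)) :=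
  ⋃ p ∈ ω, Metric.closedBall p.1 p.2

/-- `C` is a connected component of `S`. -/
def IsCompOf (C S : Set (EuclideanSpace ℝ (Fin 2))) : Prop :=
  ∃ x ∈ S, C = connectedComponentIn S x

/-!
Along the segment from `x₁ ∈ C₁` to `x₂ ∈ ω̄ ∖ C₁`, the difference `d(·, C₁) - d(·, ω̄ ∖ C₁)` goes
from `≤ 0` to `≥ 0`, so it vanishes at some `x`. Every ball of `ω` lies inside `C₁` or misses it,
so `C₁` and `ω̄ ∖ C₁` are disjoint closed sets and the common distance is positive. As
`ω̄ = C₁ ∪ (ω̄ ∖ C₁)`, the point `x` lies outside every ball of `ω`.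
-/

section InfDist

variable {α : Type*} [PseudoMetricSpace α]

theorem IsPreconnected.exists_infDist_eq {K A B : Set α} (hK : IsPreconnected K) {a b : α}
    (haK : a ∈ K) (haA : a ∈ A) (hbK : b ∈ K) (hbB : b ∈ B) :
    ∃ x ∈ K, infDist x A = infDist x B :=
  hK.intermediate_value₂ haK hbK (continuous_infDist_pt A).continuousOn
    (continuous_infDist_pt B).continuousOn
    (by rw [infDist_zero_of_mem haA]; exact infDist_nonneg)
    (by rw [infDist_zero_of_mem hbB]; exact infDist_nonneg)

theorem infDist_pos_of_infDist_eq {A B : Set α} (hA : IsClosed A) (hB : IsClosed B)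
    (hA₀ : A.Nonempty) (hB₀ : B.Nonempty) (hAB : Disjoint A B) {x : α}
    (h : infDist x A = infDist x B) : 0 < infDist x A :=
  infDist_nonneg.lt_of_ne fun h₀ =>
    hAB.ne_of_mem ((hA.mem_iff_infDist_zero hA₀).2 h₀.symm)
      ((hB.mem_iff_infDist_zero hB₀).2 (h ▸ h₀.symm)) rfl

theorem notMem_union_of_infDist_eq_of_pos {A B : Set α} {x : α}
    (h : infDist x A = infDist x B) (hpos : 0 < infDist x A) : x ∉ A ∪ B := by
  rintro (hx | hx)
  · exact hpos.ne' (infDist_zero_of_mem hx)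
  · exact hpos.ne' (h.trans (infDist_zero_of_mem hx))

end InfDist

section ConnectedComponentIn

variable {X : Type*} [TopologicalSpace X]

theorem IsClosed.isClosed_connectedComponentIn {S : Set X} (hS : IsClosed S) (x : X) :
    IsClosed (connectedComponentIn S x) := by
  by_cases hx : x ∈ S
  · rw [connectedComponentIn_eq_image hx]
    exact hS.isClosedEmbedding_subtypeVal.isClosedMap _ isClosed_connectedComponent
  · rw [connectedComponentIn_eq_empty hx]
    exact isClosed_empty

theorem IsPreconnected.subset_or_disjoint_connectedComponentIn {K S : Set X}
    (hK : IsPreconnected K) (hKS : K ⊆ S) (x : X) :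
    K ⊆ _root_.connectedComponentIn S x ∨ Disjoint K (_root_.connectedComponentIn S x) := by
  refine or_iff_not_imp_right.2 fun h => ?_
  obtain ⟨z, hzK, hzC⟩ := not_disjoint_iff.1 h
  rw [connectedComponentIn_eq hzC]
  exact hK.subset_connectedComponentIn hzK hKS

end ConnectedComponentIn

theorem closedBall_subset_surface {ω : Finset (EuclideanSpace ℝ (Fin 2) × ℝ)} {p} (hp : p ∈ ω) :
    closedBall p.1 p.2 ⊆ surface ω :=
  subset_biUnion_of_mem (u := fun p : EuclideanSpace ℝ (Fin 2) × ℝ => closedBall p.1 p.2) hp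

theorem isClosed_surface (ω : Finset (EuclideanSpace ℝ (Fin 2) × ℝ)) : IsClosed (surface ω) :=
  ω.finite_toSet.isClosed_biUnion fun _ _ => isClosed_closedBall

theorem IsCompOf.isClosed {C : Set (EuclideanSpace ℝ (Fin 2))}
    {ω : Finset (EuclideanSpace ℝ (Fin 2) × ℝ)} (hC : IsCompOf C (surface ω)) : IsClosed C := by
  obtain ⟨x, -, rfl⟩ := hC
  exact (isClosed_surface ω).isClosed_connectedComponentIn x

theorem IsCompOf.isClosed_surface_sdiff {C : Set (EuclideanSpace ℝ (Fin 2))}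
    {ω : Finset (EuclideanSpace ℝ (Fin 2) × ℝ)} (hC : IsCompOf C (surface ω)) :
    IsClosed (surface ω \ C) := by
  rw [show surface ω \ C = ⋃ p ∈ ω, closedBall p.1 p.2 \ C by simp only [surface, iUnion_sdiff]]
  obtain ⟨x, -, rfl⟩ := hC
  refine ω.finite_toSet.isClosed_biUnion fun p hp => ?_
  rcases (convex_closedBall p.1 p.2).isPreconnected.subset_or_disjoint_connectedComponentIn
    (closedBall_subset_surface hp) x with hsub | hdisj
  · rw [sdiff_eq_empty.2 hsub]
    exact isClosed_empty
  · rw [hdisj.sdiff_eq_left]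
    exact isClosed_closedBall

theorem stmt_12_general (R₀ R₁ : ℝ) (hR₀ : 0 < R₀)
    (ω : Finset (EuclideanSpace ℝ (Fin 2) × ℝ))
    (hω : ∀ p ∈ ω, p.2 ∈ Set.Icc R₀ R₁)
    (C₁ : Set (EuclideanSpace ℝ (Fin 2))) (hC₁ : IsCompOf C₁ (surface ω))
    (x₁ x₂ : EuclideanSpace ℝ (Fin 2)) (r₁ r₂ : ℝ)
    (hx₁ : (x₁, r₁) ∈ ω) (hb₁ : Metric.closedBall x₁ r₁ ⊆ C₁)
    (hx₂ : (x₂, r₂) ∈ ω) (hb₂ : Disjoint (Metric.closedBall x₂ r₂) C₁) :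
    ∃ x ∈ segment ℝ x₁ x₂,
      Metric.infDist x C₁ = Metric.infDist x (surface ω \ C₁) ∧
      0 < Metric.infDist x C₁ ∧
      (∀ p ∈ ω, p.2 < dist x p.1) ∧
      (∀ p ∈ ω, p.1 ∉ Metric.ball x R₀) := by
  have hc₁ : x₁ ∈ closedBall x₁ r₁ := mem_closedBall_self (hR₀.le.trans (hω _ hx₁).1)
  have hc₂ : x₂ ∈ closedBall x₂ r₂ := mem_closedBall_self (hR₀.le.trans (hω _ hx₂).1)
  have hx₁C : x₁ ∈ C₁ := hb₁ hc₁
  have hx₂D : x₂ ∈ surface ω \ C₁ :=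
    ⟨closedBall_subset_surface hx₂ hc₂, hb₂.notMem_of_mem_left hc₂⟩
  obtain ⟨x, hx, heq⟩ := (convex_segment x₁ x₂).isPreconnected.exists_infDist_eq
    (left_mem_segment ℝ x₁ x₂) hx₁C (right_mem_segment ℝ x₁ x₂) hx₂D
  have hpos := infDist_pos_of_infDist_eq hC₁.isClosed hC₁.isClosed_surface_sdiff
    ⟨x₁, hx₁C⟩ ⟨x₂, hx₂D⟩ disjoint_sdiff_right heq
  have hfar : ∀ p ∈ ω, p.2 < dist x p.1 := fun p hp => not_le.1 fun h =>
    notMem_union_of_infDist_eq_of_pos heq hpos <| by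
      rw [union_sdiff_self]
      exact Or.inr (closedBall_subset_surface hp (mem_closedBall.2 h))
  refine ⟨x, hx, heq, hpos, hfar, fun p hp hball => ?_⟩
  rw [mem_ball, dist_comm] at hball
  linarith [hfar p hp, (hω p hp).1]

theorem stmt_12 (R₀ R₁ : ℝ) (hR₀ : 0 < R₀) (hR₀₁ : R₀ ≤ R₁)
    (ω : Finset (EuclideanSpace ℝ (Fin 2) × ℝ))
    (hω : ∀ p ∈ ω, p.2 ∈ Set.Icc R₀ R₁)
    (C₁ : Set (EuclideanSpace ℝ (Fin 2))) (hC₁ : IsCompOf C₁ (surface ω))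
    (x₁ x₂ : EuclideanSpace ℝ (Fin 2)) (r₁ r₂ : ℝ)
    (hx₁ : (x₁, r₁) ∈ ω) (hb₁ : Metric.closedBall x₁ r₁ ⊆ C₁)
    (hx₂ : (x₂, r₂) ∈ ω) (hb₂ : Disjoint (Metric.closedBall x₂ r₂) C₁) :
    ∃ x ∈ segment ℝ x₁ x₂,
      Metric.infDist x C₁ = Metric.infDist x (surface ω \ C₁) ∧
      0 < Metric.infDist x C₁ ∧
      (∀ p ∈ ω, p.2 < dist x p.1) ∧
      (∀ p ∈ ω, p.1 ∉ Metric.ball x R₀) :=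
  stmt_12_general R₀ R₁ hR₀ ω hω C₁ hC₁ x₁ x₂ r₁ r₂ hx₁ hb₁ hx₂ hb₂
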